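/- The Diversity Owen value is the unique value on the class GD of TU-games with diversity constraints that satisfies Efficiency, Fairness within Component, Fairness through Diversity, Independence from Non-Diverse Coalitions, and Null Player for Diverse Games. -/

import Mathlib

open Finset
open scoped Classical

/-- A TU-game with diversity constraints `(N, v, 𝓑, d)` (data only);
the components `B 0, …, B (m-1)` are indexed by `Fin m`. -/
structure DivGame where
  m : ℕ
  N : Finset ℕ
  v : Finset ℕ → ℝ
  B : Fin m → Finset ℕ
  d : Fin m → ℕ

/-- Membership in the class `GD` of TU-games with diversity constraints:
`v ∅ = 0`, `𝓑` is a partition of `N` into components, and `1 ≤ d k ≤ |B k|`. -/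
def IsGD (G : DivGame) : Prop :=
  G.v ∅ = 0 ∧
  (∀ k, G.B k ⊆ G.N) ∧
  (∀ i ∈ G.N, ∃! k, i ∈ G.B k) ∧
  (∀ k, 1 ≤ G.d k ∧ G.d k ≤ (G.B k).card)

/-- `S` is a diverse coalition: `|S ∩ B k| ≥ d k` for every component index `k`. -/
def DiverseCoal (G : DivGame) (S : Finset ℕ) : Prop :=
  ∀ k, G.d k ≤ (S ∩ G.B k).card

/-- The diversity-restricted game `v^d`. -/
noncomputable def restrictedGame (G : DivGame) : Finset ℕ → ℝ :=
  fun S => if DiverseCoal G S then G.v S else 0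

/-- The Owen value of player `i` in the game `v` with coalition structure `B` on `Fin m`. -/
noncomputable def Owen (m : ℕ) (v : Finset ℕ → ℝ) (B : Fin m → Finset ℕ) (i : ℕ) : ℝ :=
  ∑ k ∈ univ.filter (fun k => i ∈ B k),
    ∑ R ∈ ((univ : Finset (Fin m)).erase k).powerset,
      ∑ S ∈ ((B k).erase i).powerset,
        ((R.card.factorial * (m - R.card - 1).factorial : ℝ) / m.factorial) *
          ((S.card.factorial * ((B k).card - S.card - 1).factorial : ℝ) /
            (B k).card.factorial) *
          (v (R.biUnion B ∪ S ∪ {i}) - v (R.biUnion B ∪ S))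

/-- The Diversity Owen value: `DOw (N,v,𝓑,d) = Ow (N, v^d, 𝓑)`. -/
noncomputable def DOw (G : DivGame) : ℕ → ℝ :=
  Owen G.m (restrictedGame G) G.B

/-- The game on the same `(N, 𝓑, d)` with characteristic function `v`. -/
def gameWith (G : DivGame) (v : Finset ℕ → ℝ) : DivGame := { G with v := v }

/-- The induced subgame `(N \ {i}, v|_{N\{i}}, 𝓑|_{N\{i}}, d)` obtained by removing player `i`. -/
def dropPlayer (G : DivGame) (i : ℕ) : DivGame :=
  { G with N := G.N.erase i, B := fun k => (G.B k).erase i }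

/-- Player `i` is null in `v` (on player set `N`): `v (S ∪ {i}) = v S` for all `S ⊆ N \ {i}`. -/
def NullPlayerIn (v : Finset ℕ → ℝ) (N : Finset ℕ) (i : ℕ) : Prop :=
  ∀ S ⊆ N.erase i, v (insert i S) = v S

/-- Players `i` and `j` are symmetric in `v` (on player set `N`). -/
def SymmetricIn (v : Finset ℕ → ℝ) (N : Finset ℕ) (i j : ℕ) : Prop :=
  ∀ S ⊆ N \ {i, j}, v (insert i S) - v S = v (insert j S) - v S

/-- The game is diverse: `v S ≠ 0` implies `S` is a diverse coalition. -/
def IsDiverseGame (G : DivGame) : Prop :=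
  ∀ S ⊆ G.N, G.v S ≠ 0 → DiverseCoal G S

/-- Player `i` is an out player: `i ∈ B k` with `|B k| - d k ≥ 1`. -/
def OutPlayer (G : DivGame) (i : ℕ) : Prop :=
  ∃ k, i ∈ G.B k ∧ G.d k < (G.B k).card

/-- The game is `i`-out diverse: diverse and `i` is an out player. -/
def IOutDiverse (G : DivGame) (i : ℕ) : Prop :=
  IsDiverseGame G ∧ OutPlayer G i

/-- A value on `GD`. -/
abbrev Value := DivGame → ℕ → ℝ

/-- Efficiency (E). -/
def Efficiency (f : Value) : Prop :=
  ∀ G, IsGD G → ∑ i ∈ G.N, f G i = G.v G.N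

/-- Null Player Out for Preserving-Diversity Games (NPOPD). -/
def NPOPD (f : Value) : Prop :=
  ∀ G, IsGD G → ∀ i, IOutDiverse G i → NullPlayerIn G.v G.N i →
    ∀ j ∈ G.N.erase i, f G j = f (dropPlayer G i) j

/-- Fairness within Component (FwC). -/
def FwC (f : Value) : Prop :=
  ∀ G : DivGame, ∀ v w : Finset ℕ → ℝ,
    IsGD (gameWith G v) → IsGD (gameWith G w) →
    ∀ p : Fin G.m, ∀ i ∈ G.B p, ∀ j ∈ G.B p, SymmetricIn v G.N i j →
      f (gameWith G (v + w)) i - f (gameWith G w) i =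
        f (gameWith G (v + w)) j - f (gameWith G w) j

/-- Fairness through Diversity (FD). -/
def FD (f : Value) : Prop :=
  ∀ G : DivGame, ∀ v w : Finset ℕ → ℝ,
    IsGD (gameWith G v) → IsGD (gameWith G w) →
    ∀ p q : Fin G.m,
      (∑ i ∈ G.B p, f (gameWith G (v + w)) i) - (∑ i ∈ G.B p, f (gameWith G w) i) =
        (∑ i ∈ G.B q, f (gameWith G (v + w)) i) - (∑ i ∈ G.B q, f (gameWith G w) i)

/-- Independence from Non-Diverse Coalitions (INDC). -/
def INDC (f : Value) : Prop :=
  ∀ G : DivGame, ∀ v w : Finset ℕ → ℝ,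
    IsGD (gameWith G v) → IsGD (gameWith G w) →
    (∀ S ⊆ G.N, DiverseCoal G S → v S = w S) →
    ∀ i ∈ G.N, f (gameWith G v) i = f (gameWith G w) i

/-- Equality through diversity (ED). -/
def ED (f : Value) : Prop :=
  ∀ G, IsGD G → ∀ k q : Fin G.m, ∑ i ∈ G.B k, f G i = ∑ i ∈ G.B q, f G i

/-- Null Player for Diverse Games (ND). -/
def ND (f : Value) : Prop :=
  ∀ G, IsGD G → IsDiverseGame G → ∀ i ∈ G.N, NullPlayerIn G.v G.N i → f G i = 0

/-- Intra-coalitional balanced contributions with out players for preserving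
diversity (IBCOPPD). -/
def IBCOPPD (f : Value) : Prop :=
  ∀ G, IsGD G → IsDiverseGame G →
    ∀ p : Fin G.m, ∀ i ∈ G.B p, ∀ j ∈ G.B p, i ≠ j → G.d p < (G.B p).card →
      (f G i - f (dropPlayer G j) i = f G j - f (dropPlayer G i) j) ∧
      (NullPlayerIn (dropPlayer G j).v (dropPlayer G j).N i → f (dropPlayer G j) i = 0) ∧
      (NullPlayerIn (dropPlayer G i).v (dropPlayer G i).N j → f (dropPlayer G i) j = 0)

/-- Weak intra-coalitional balanced contributions with out players for preserving
diversity (IBCOPPD⁻). -/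
def IBCOPPDweak (f : Value) : Prop :=
  (∀ G, IsGD G → IsDiverseGame G →
    ∀ p : Fin G.m, ∀ i ∈ G.B p, ∀ j ∈ G.B p, i ≠ j → G.d p < (G.B p).card →
      f G i - f (dropPlayer G j) i = f G j - f (dropPlayer G i) j) ∧
  (∀ G, IsGD G → G.v = (fun _ => 0) → ∀ k ∈ G.N, f G k = 0)

/-- The extended game `(N ∪ {l}, (v)₊ₗ, 𝓑₊ₗ, d)` obtained by adding an
outside player `l` to the component `B k`. -/
def addPlayer (G : DivGame) (k : Fin G.m) (l : ℕ) : DivGame :=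
  { m := G.m
    N := insert l G.N
    v := fun S => G.v (S.erase l)
    B := fun k' => if k' = k then insert l (G.B k) else G.B k'
    d := G.d }



noncomputable def dividend (v : Finset ℕ → ℝ) (T : Finset ℕ) : ℝ :=
  ∑ S ∈ T.powerset, (-1 : ℝ) ^ ((T \ S).card) * v S

lemma alt_sum_real (A : Finset ℕ) :
    (∑ T ∈ A.powerset, (-1 : ℝ) ^ T.card) = if A = ∅ then 1 else 0 := by
  have h := Finset.sum_powerset_neg_one_pow_card (x := A)
  have h2 : ((∑ m ∈ A.powerset, (-1 : ℤ) ^ m.card : ℤ) : ℝ)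
      = ((if A = ∅ then 1 else 0 : ℤ) : ℝ) := by rw [h]
  push_cast at h2
  simpa using h2

lemma alt_between (U S : Finset ℕ) (hUS : U ⊆ S) :
    ∑ T ∈ S.powerset.filter (fun T => U ⊆ T), (-1:ℝ)^((T \ U).card)
      = if U = S then 1 else 0 := by
  have := Finset.sum_nbij' (i := fun T => T \ U) (j := fun W => U ∪ W)
    (s := S.powerset.filter (fun T => U ⊆ T)) (t := (S \ U).powerset)
    (f := fun T => (-1:ℝ)^((T \ U).card)) (g := fun W => (-1:ℝ)^(W.card))
    (by intro T hT
        simp only [mem_filter, mem_powerset] at hT ⊢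
        exact sdiff_subset_sdiff hT.1 le_rfl)
    (by intro W hW
        simp only [mem_powerset] at hW
        simp only [mem_filter, mem_powerset]
        constructor
        · exact union_subset hUS (hW.trans sdiff_subset)
        · exact subset_union_left)
    (by intro T hT
        simp only [mem_filter, mem_powerset] at hT
        exact union_sdiff_of_subset hT.2)
    (by intro W hW
        simp only [mem_powerset] at hW
        have hd : Disjoint U W := Finset.disjoint_left.mpr fun a ha hb => (mem_sdiff.1 (hW hb)).2 ha
        exact union_sdiff_cancel_left hd)
    (by intro T hT; rfl)
  rw [this, alt_sum_real]
  by_cases h : U = S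
  · subst h; simp
  · have hne : S \ U ≠ ∅ := fun he => h (le_antisymm hUS (sdiff_eq_empty_iff_subset.1 he))
    rw [if_neg hne, if_neg h]

lemma sdiff_card_split {U S T : Finset ℕ} (hUS : U ⊆ S) (hST : S ⊆ T) :
    (T \ U).card = (T \ S).card + (S \ U).card := by
  rw [← card_union_of_disjoint]
  · congr 1
    ext x
    have h1 : x ∈ U → x ∈ S := fun h => hUS h
    have h2 : x ∈ S → x ∈ T := fun h => hST h
    simp only [mem_union, mem_sdiff]
    tauto
  · exact Finset.disjoint_left.mpr fun a ha hb => (mem_sdiff.1 ha).2 (mem_sdiff.1 hb).1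

lemma alt_between' (U T : Finset ℕ) (hUT : U ⊆ T) :
    ∑ S ∈ T.powerset.filter (fun S => U ⊆ S), (-1:ℝ)^((T \ S).card)
      = if U = T then 1 else 0 := by
  have hcongr : ∀ S ∈ T.powerset.filter (fun S => U ⊆ S),
      (-1:ℝ)^((T \ S).card) = (-1:ℝ)^((T \ U).card) * (-1:ℝ)^((S \ U).card) := by
    intro S hS
    simp only [mem_filter, mem_powerset] at hS
    have h := sdiff_card_split hS.2 hS.1
    have : ((-1:ℝ)^((T\S).card)) * ((-1:ℝ)^((S\U).card) * (-1:ℝ)^((S\U).card)) =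
        (-1:ℝ)^((T\U).card) * (-1:ℝ)^((S\U).card) := by
      rw [h, pow_add]; ring
    simpa [← pow_add, ← two_mul, pow_mul, neg_one_sq] using this
  rw [sum_congr rfl hcongr, ← mul_sum, alt_between U T hUT]
  by_cases h : U = T
  · subst h; simp
  · simp [h]

lemma powerset_sum_comm (S : Finset ℕ) (F : Finset ℕ → Finset ℕ → ℝ) :
    ∑ T ∈ S.powerset, ∑ U ∈ T.powerset, F T U
      = ∑ U ∈ S.powerset, ∑ T ∈ S.powerset.filter (fun T => U ⊆ T), F T U := by
  have h1 : ∀ T ∈ S.powerset, ∑ U ∈ T.powerset, F T U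
      = ∑ U ∈ S.powerset, if U ⊆ T then F T U else 0 := by
    intro T hT
    rw [mem_powerset] at hT
    rw [← sum_filter]
    congr 1
    ext U
    simp only [mem_powerset, mem_filter]
    exact ⟨fun h => ⟨h.trans hT, h⟩, fun h => h.2⟩
  rw [sum_congr rfl h1, sum_comm]
  exact sum_congr rfl fun U _ => (sum_filter _ _).symm

lemma sum_dividend (v : Finset ℕ → ℝ) (S : Finset ℕ) :
    ∑ T ∈ S.powerset, dividend v T = v S := by
  unfold dividend
  rw [powerset_sum_comm S (fun T U => (-1:ℝ)^((T \ U).card) * v U)]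
  have h1 : ∀ U ∈ S.powerset,
      ∑ T ∈ S.powerset.filter (fun T => U ⊆ T), (-1:ℝ)^((T \ U).card) * v U
        = (if U = S then 1 else 0) * v U := by
    intro U hU
    rw [← sum_mul, alt_between U S (mem_powerset.1 hU)]
  rw [sum_congr rfl h1]
  simp

lemma dividend_eq_of_repr (w e : Finset ℕ → ℝ)
    (h : ∀ S, w S = ∑ U ∈ S.powerset, e U) (T : Finset ℕ) :
    dividend w T = e T := by
  unfold dividend
  have h1 : ∀ S ∈ T.powerset, (-1:ℝ)^((T \ S).card) * w S
      = ∑ U ∈ S.powerset, (-1:ℝ)^((T \ S).card) * e U := by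
    intro S _
    rw [h S, mul_sum]
  rw [sum_congr rfl h1, powerset_sum_comm T (fun S U => (-1:ℝ)^((T \ S).card) * e U)]
  have h2 : ∀ U ∈ T.powerset,
      ∑ S ∈ T.powerset.filter (fun S => U ⊆ S), (-1:ℝ)^((T \ S).card) * e U
        = (if U = T then 1 else 0) * e U := by
    intro U hU
    rw [← sum_mul, alt_between' U T (mem_powerset.1 hU)]
  rw [sum_congr rfl h2]
  simp

lemma hockey (a F : ℕ) :
    ∑ t ∈ range (F+1), ((a+t).choose a) = (a+F+1).choose (a+1) := by
  have h := Nat.sum_Icc_choose (a+F) a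
  have : (a + F + 1) = (a + F) + 1 := rfl
  rw [this, ← h]
  apply Finset.sum_nbij' (i := fun t => a + t) (j := fun m => m - a)
  · intro t ht
    simp only [mem_range] at ht
    simp only [mem_Icc]
    omega
  · intro m hm
    simp only [mem_Icc] at hm
    simp only [mem_range]
    omega
  · intro t _; omega
  · intro m hm
    simp only [mem_Icc] at hm
    omega
  · intro t _; rfl

lemma choose_fact_fact (a F t : ℕ) (h : t ≤ F) :
    F.choose t * ((a+t).factorial * (F-t).factorial)
      = F.factorial * a.factorial * (a+t).choose a := by
  apply Nat.eq_of_mul_eq_mul_right (Nat.factorial_pos t)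
  have h1 : F.choose t * t.factorial * (F - t).factorial = F.factorial :=
    Nat.choose_mul_factorial_mul_factorial h
  have h2 : (a+t).choose a * a.factorial * ((a+t) - a).factorial = (a+t).factorial :=
    Nat.choose_mul_factorial_mul_factorial (by omega)
  have h3 : (a+t) - a = t := by omega
  rw [h3] at h2
  calc F.choose t * ((a+t).factorial * (F-t).factorial) * t.factorial
      = (F.choose t * t.factorial * (F-t).factorial) * (a+t).factorial := by ring
    _ = F.factorial * (a+t).factorial := by rw [h1]
    _ = F.factorial * ((a+t).choose a * a.factorial * t.factorial) := by rw [h2]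
    _ = F.factorial * a.factorial * (a+t).choose a * t.factorial := by ring

lemma choose_key (a F : ℕ) :
    (a+F+1).choose (a+1) * ((a+1) * (a.factorial * F.factorial))
      = (a+F+1).factorial := by
  have h := Nat.choose_mul_factorial_mul_factorial (show a+1 ≤ a+F+1 by omega)
  have h3 : (a+F+1) - (a+1) = F := by omega
  rw [h3] at h
  calc (a+F+1).choose (a+1) * ((a+1) * (a.factorial * F.factorial))
      = (a+F+1).choose (a+1) * ((a+1) * a.factorial) * F.factorial := by ring
    _ = (a+F+1).choose (a+1) * (a+1).factorial * F.factorial := by rw [Nat.factorial_succ]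
    _ = (a+F+1).factorial := h

lemma weight_sum_numeric (a F : ℕ) :
    ∑ t ∈ range (F+1),
      ((F.choose t : ℝ) * (((a+t).factorial : ℝ) * ((F-t).factorial : ℝ)))
      = ((a+F+1).factorial : ℝ) / ((a:ℝ) + 1) := by
  have hterm : ∀ t ∈ range (F+1),
      ((F.choose t : ℝ) * (((a+t).factorial : ℝ) * ((F-t).factorial : ℝ)))
        = ((F.factorial * a.factorial : ℕ) : ℝ) * (((a+t).choose a : ℕ) : ℝ) := by
    intro t ht
    simp only [mem_range] at ht
    have h := choose_fact_fact a F t (by omega)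
    calc ((F.choose t : ℝ) * (((a+t).factorial : ℝ) * ((F-t).factorial : ℝ)))
        = ((F.choose t * ((a+t).factorial * (F-t).factorial) : ℕ) : ℝ) := by push_cast; ring
      _ = ((F.factorial * a.factorial * (a+t).choose a : ℕ) : ℝ) := by rw [h]
      _ = _ := by push_cast; ring
  rw [sum_congr rfl hterm, ← mul_sum, ← Nat.cast_sum]
  rw [hockey a F]
  have key := choose_key a F
  have hpos : ((a:ℝ) + 1) ≠ 0 := by positivity
  field_simp
  push_cast [← key]
  ring

lemma shap_sum (E : Finset ℕ) (i : ℕ) (hi : i ∈ E) (A : Finset ℕ) (hA : A ⊆ E.erase i) :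
    ∑ S ∈ (E.erase i).powerset.filter (fun S => A ⊆ S),
      ((S.card.factorial : ℝ) * ((E.card - S.card - 1).factorial : ℝ) / (E.card.factorial : ℝ))
      = 1 / ((A.card : ℝ) + 1) := by
  classical
  set F : Finset ℕ := (E.erase i) \ A with hF
  have hcardE : E.card = A.card + F.card + 1 := by
    have h1 : (E.erase i).card = E.card - 1 := card_erase_of_mem hi
    have h2 : F.card = (E.erase i).card - A.card := card_sdiff_of_subset hA
    have h3 : A.card ≤ (E.erase i).card := card_le_card hA
    have h4 : 1 ≤ E.card := card_pos.mpr ⟨i, hi⟩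
    omega
  have step1 : ∑ S ∈ (E.erase i).powerset.filter (fun S => A ⊆ S),
      ((S.card.factorial : ℝ) * ((E.card - S.card - 1).factorial : ℝ) / (E.card.factorial : ℝ))
      = ∑ W ∈ F.powerset,
      (((A.card + W.card).factorial : ℝ) * ((E.card - (A.card + W.card) - 1).factorial : ℝ)
        / (E.card.factorial : ℝ)) := by
    apply Finset.sum_nbij' (i := fun S => S \ A) (j := fun W => A ∪ W)
    · intro S hS
      simp only [mem_filter, mem_powerset] at hS
      simp only [mem_powerset, hF]
      exact sdiff_subset_sdiff hS.1 le_rfl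
    · intro W hW
      simp only [mem_powerset, hF] at hW
      simp only [mem_filter, mem_powerset]
      exact ⟨union_subset hA (hW.trans sdiff_subset), subset_union_left⟩
    · intro S hS
      simp only [mem_filter, mem_powerset] at hS
      exact union_sdiff_of_subset hS.2
    · intro W hW
      simp only [mem_powerset, hF] at hW
      have hd : Disjoint A W := Finset.disjoint_left.mpr
        fun a ha hb => (mem_sdiff.1 (hW hb)).2 ha
      exact union_sdiff_cancel_left hd
    · intro S hS
      simp only [mem_filter, mem_powerset] at hS
      have : S.card = A.card + (S \ A).card := by
        rw [card_sdiff_of_subset hS.2]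
        have := card_le_card hS.2
        omega
      rw [← this]
  rw [step1]
  have step2 := Finset.sum_powerset_apply_card
    (f := fun t => (((A.card + t).factorial : ℝ) * ((E.card - (A.card + t) - 1).factorial : ℝ)
        / (E.card.factorial : ℝ))) (x := F)
  rw [step2]
  have step3 : ∀ t ∈ range (F.card + 1),
      F.card.choose t • (((A.card + t).factorial : ℝ)
          * ((E.card - (A.card + t) - 1).factorial : ℝ) / (E.card.factorial : ℝ))
      = ((F.card.choose t : ℝ) * (((A.card + t).factorial : ℝ) * ((F.card - t).factorial : ℝ)))
          / (E.card.factorial : ℝ) := by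
    intro t ht
    simp only [mem_range] at ht
    have : E.card - (A.card + t) - 1 = F.card - t := by omega
    rw [this, nsmul_eq_mul]
    ring
  rw [sum_congr rfl step3, ← sum_div, weight_sum_numeric A.card F.card]
  rw [show A.card + F.card + 1 = E.card from hcardE.symm]
  have h1 : ((E.card.factorial : ℝ)) ≠ 0 := by positivity
  have h2 : ((A.card : ℝ) + 1) ≠ 0 := by positivity
  field_simp

section GDLemmas

variable {G : DivGame}

lemma comp_unique (hG : IsGD G) {i : ℕ} {k l : Fin G.m}
    (h1 : i ∈ G.B k) (h2 : i ∈ G.B l) : k = l := by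
  obtain ⟨k₀, _, huniq⟩ := hG.2.2.1 i (hG.2.1 k h1)
  rw [huniq k h1, huniq l h2]

lemma filter_comp (hG : IsGD G) {i : ℕ} {k : Fin G.m} (h : i ∈ G.B k) :
    (univ : Finset (Fin G.m)).filter (fun l => i ∈ G.B l) = {k} := by
  ext l
  simp only [mem_filter, mem_univ, true_and, mem_singleton]
  exact ⟨fun hl => comp_unique hG hl h, fun hl => hl ▸ h⟩

lemma N_eq_biUnion (hG : IsGD G) : G.N = (univ : Finset (Fin G.m)).biUnion G.B := by
  ext x
  simp only [mem_biUnion, mem_univ, true_and]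
  constructor
  · intro hx
    obtain ⟨k, hk, _⟩ := hG.2.2.1 x hx
    exact ⟨k, hk⟩
  · rintro ⟨k, hk⟩
    exact hG.2.1 k hk

lemma sum_over_N (hG : IsGD G) (h : ℕ → ℝ) :
    ∑ i ∈ G.N, h i = ∑ k : Fin G.m, ∑ i ∈ G.B k, h i := by
  rw [N_eq_biUnion hG]
  apply sum_biUnion
  intro k _ l _ hkl
  exact Finset.disjoint_left.mpr fun a ha hb => hkl (comp_unique hG ha hb)

lemma diverse_mono {S T : Finset ℕ} (hST : S ⊆ T) (hS : DiverseCoal G S) :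
    DiverseCoal G T :=
  fun k => le_trans (hS k) (card_le_card (inter_subset_inter hST le_rfl))

lemma diverse_N (hG : IsGD G) : DiverseCoal G G.N := by
  intro k
  have : G.N ∩ G.B k = G.B k := inter_eq_right.mpr (hG.2.1 k)
  rw [this]
  exact (hG.2.2.2 k).2

lemma empty_not_diverse (hG : IsGD G) (k : Fin G.m) : ¬ DiverseCoal G ∅ := by
  intro h
  have := h k
  simp only [empty_inter, card_empty] at this
  exact absurd (le_trans (hG.2.2.2 k).1 this) (by omega)

lemma rg_empty (hG : IsGD G) : restrictedGame G ∅ = 0 := by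
  unfold restrictedGame
  split
  · exact hG.1
  · rfl

lemma isGD_gameWith (hG : IsGD G) {v : Finset ℕ → ℝ} (h0 : v ∅ = 0) :
    IsGD (gameWith G v) := ⟨h0, hG.2⟩

lemma gameWith_self : gameWith G G.v = G := rfl

lemma diverseCoal_gameWith {v : Finset ℕ → ℝ} {S : Finset ℕ} :
    DiverseCoal (gameWith G v) S ↔ DiverseCoal G S := Iff.rfl

lemma dividend_nondiverse (hG : IsGD G) (hdiv : IsDiverseGame G)
    {T : Finset ℕ} (hT : T ⊆ G.N) (hnd : ¬ DiverseCoal G T) :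
    dividend G.v T = 0 := by
  unfold dividend
  apply sum_eq_zero
  intro S hS
  rw [mem_powerset] at hS
  have hSnd : G.v S = 0 := by
    by_contra h
    exact hnd (diverse_mono hS (hdiv S (hS.trans hT) h))
  rw [hSnd, mul_zero]

end GDLemmas

section Swap

noncomputable def swapF (i j : ℕ) (T : Finset ℕ) : Finset ℕ :=
  if i ∈ T ∧ j ∉ T then insert j (T.erase i)
  else if j ∈ T ∧ i ∉ T then insert i (T.erase j)
  else T

variable {i j : ℕ} (hij : i ≠ j)

lemma swapF_of_left {T : Finset ℕ} (h1 : i ∈ T) (h2 : j ∉ T) :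
    swapF i j T = insert j (T.erase i) := by
  unfold swapF; rw [if_pos ⟨h1, h2⟩]

lemma swapF_of_right {T : Finset ℕ} (h1 : j ∈ T) (h2 : i ∉ T) :
    swapF i j T = insert i (T.erase j) := by
  unfold swapF
  rw [if_neg (by tauto), if_pos ⟨h1, h2⟩]

lemma swapF_of_other {T : Finset ℕ} (h : (i ∈ T ↔ j ∈ T)) :
    swapF i j T = T := by
  unfold swapF
  rw [if_neg (by tauto), if_neg (by tauto)]

include hij

lemma mem_swapF_left {T : Finset ℕ} (h1 : i ∈ T) (h2 : j ∉ T) :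
    j ∈ swapF i j T ∧ i ∉ swapF i j T := by
  rw [swapF_of_left h1 h2]
  simp only [mem_insert, mem_erase]
  tauto

lemma swapF_swapF (T : Finset ℕ) : swapF i j (swapF i j T) = T := by
  by_cases h1 : i ∈ T <;> by_cases h2 : j ∈ T
  · rw [swapF_of_other (T := T) (by tauto), swapF_of_other (T := T) (by tauto)]
  · rw [swapF_of_left h1 h2, swapF_of_right (by simp) (by simp [hij, h2])]
    rw [erase_insert (by simp [h2])]
    rw [insert_erase h1]
  · rw [swapF_of_right h2 h1, swapF_of_left (by simp) (by simp [Ne.symm hij, h1])]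
    rw [erase_insert (by simp [h1])]
    rw [insert_erase h2]
  · rw [swapF_of_other (T := T) (by tauto), swapF_of_other (T := T) (by tauto)]

lemma card_swapF (T : Finset ℕ) : (swapF i j T).card = T.card := by
  by_cases h1 : i ∈ T <;> by_cases h2 : j ∈ T
  · rw [swapF_of_other (by tauto)]
  · rw [swapF_of_left h1 h2, card_insert_of_notMem (by simp [h2]), card_erase_of_mem h1]
    have := card_pos.mpr ⟨i, h1⟩
    omega
  · rw [swapF_of_right h2 h1, card_insert_of_notMem (by simp [h1]), card_erase_of_mem h2]
    have := card_pos.mpr ⟨j, h2⟩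
    omega
  · rw [swapF_of_other (by tauto)]

lemma swapF_subset {S T : Finset ℕ} (hST : S ⊆ T) : swapF i j S ⊆ swapF i j T := by
  by_cases h1 : i ∈ S <;> by_cases h2 : j ∈ S
  · rw [swapF_of_other (by tauto)]
    intro x hx
    by_cases hxi : x = i
    · subst hxi
      by_cases hjT : j ∈ T
      · rw [swapF_of_other (by tauto)]; exact hST hx
      · exact absurd (hST h2) hjT
    · by_cases hxj : x = j
      · subst hxj
        by_cases hiT : i ∈ T
        · rw [swapF_of_other (by tauto)]; exact hST hx
        · exact absurd (hST h1) hiT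
      · have hxT : x ∈ T := hST hx
        by_cases hiT : i ∈ T <;> by_cases hjT : j ∈ T
        · rw [swapF_of_other (by tauto)]; exact hxT
        · rw [swapF_of_left hiT hjT]; simp [hxj, hxi, hxT]
        · rw [swapF_of_right hjT hiT]; simp [hxj, hxi, hxT]
        · rw [swapF_of_other (by tauto)]; exact hxT
  · -- i ∈ S, j ∉ S
    rw [swapF_of_left h1 h2]
    have hiT : i ∈ T := hST h1
    intro x hx
    simp only [mem_insert, mem_erase] at hx
    by_cases hjT : j ∈ T
    · rw [swapF_of_other (by tauto)]
      rcases hx with rfl | ⟨_, hxS⟩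
      · exact hjT
      · exact hST hxS
    · rw [swapF_of_left hiT hjT]
      simp only [mem_insert, mem_erase]
      rcases hx with rfl | ⟨hxi, hxS⟩
      · exact Or.inl rfl
      · exact Or.inr ⟨hxi, hST hxS⟩
  · -- j ∈ S, i ∉ S
    rw [swapF_of_right h2 h1]
    have hjT : j ∈ T := hST h2
    intro x hx
    simp only [mem_insert, mem_erase] at hx
    by_cases hiT : i ∈ T
    · rw [swapF_of_other (by tauto)]
      rcases hx with rfl | ⟨_, hxS⟩
      · exact hiT
      · exact hST hxS
    · rw [swapF_of_right hjT hiT]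
      simp only [mem_insert, mem_erase]
      rcases hx with rfl | ⟨hxi, hxS⟩
      · exact Or.inl rfl
      · exact Or.inr ⟨hxi, hST hxS⟩
  · -- neither in S
    rw [swapF_of_other (by tauto)]
    intro x hx
    have hxT : x ∈ T := hST hx
    have hxi : x ≠ i := fun h => h1 (h ▸ hx)
    have hxj : x ≠ j := fun h => h2 (h ▸ hx)
    by_cases hiT : i ∈ T <;> by_cases hjT : j ∈ T
    · rw [swapF_of_other (by tauto)]; exact hxT
    · rw [swapF_of_left hiT hjT]; simp [hxj, hxi, hxT]
    · rw [swapF_of_right hjT hiT]; simp [hxj, hxi, hxT]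
    · rw [swapF_of_other (by tauto)]; exact hxT

lemma swapF_subset_N {T N : Finset ℕ} (hT : T ⊆ N) (hi : i ∈ N) (hj : j ∈ N) :
    swapF i j T ⊆ N := by
  by_cases h1 : i ∈ T <;> by_cases h2 : j ∈ T
  · rw [swapF_of_other (by tauto)]; exact hT
  · rw [swapF_of_left h1 h2]
    exact insert_subset hj ((erase_subset _ _).trans hT)
  · rw [swapF_of_right h2 h1]
    exact insert_subset hi ((erase_subset _ _).trans hT)
  · rw [swapF_of_other (by tauto)]; exact hT

end Swap

section SwapGD

variable {G : DivGame} {i j : ℕ} {p : Fin G.m}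

lemma card_inter_swapF (hG : IsGD G) (hi : i ∈ G.B p) (hj : j ∈ G.B p)
    (T : Finset ℕ) (k : Fin G.m) :
    ((swapF i j T) ∩ G.B k).card = (T ∩ G.B k).card := by
  by_cases h1 : i ∈ T <;> by_cases h2 : j ∈ T
  · rw [swapF_of_other (by tauto)]
  · rw [swapF_of_left h1 h2]
    by_cases hk : j ∈ G.B k
    · have hkp : k = p := comp_unique hG hk hj
      subst hkp
      rw [insert_inter_of_mem hk, erase_inter, card_insert_of_notMem (by simp [h2])]
      have hiTk : i ∈ T ∩ G.B k := mem_inter.mpr ⟨h1, hi⟩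
      rw [card_erase_of_mem hiTk]
      have := card_pos.mpr ⟨i, hiTk⟩
      omega
    · have hik : i ∉ G.B k := fun h => hk (comp_unique hG h hi ▸ hj)
      rw [insert_inter_of_notMem hk, erase_inter,
        erase_eq_of_notMem (by simp [hik])]
  · rw [swapF_of_right h2 h1]
    by_cases hk : i ∈ G.B k
    · have hkp : k = p := comp_unique hG hk hi
      subst hkp
      rw [insert_inter_of_mem hk, erase_inter, card_insert_of_notMem (by simp [h1])]
      have hjTk : j ∈ T ∩ G.B k := mem_inter.mpr ⟨h2, hj⟩
      rw [card_erase_of_mem hjTk]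
      have := card_pos.mpr ⟨j, hjTk⟩
      omega
    · have hjk : j ∉ G.B k := fun h => hk (comp_unique hG h hj ▸ hi)
      rw [insert_inter_of_notMem hk, erase_inter,
        erase_eq_of_notMem (by simp [hjk])]
  · rw [swapF_of_other (by tauto)]

lemma diverse_swapF (hG : IsGD G) (hi : i ∈ G.B p) (hj : j ∈ G.B p)
    {T : Finset ℕ} (hT : DiverseCoal G T) : DiverseCoal G (swapF i j T) := by
  intro k
  rw [card_inter_swapF hG hi hj]
  exact hT k

lemma sum_powerset_swapF (hij : i ≠ j) (f : Finset ℕ → ℝ) (X : Finset ℕ) :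
    ∑ T ∈ (swapF i j X).powerset, f T = ∑ T ∈ X.powerset, f (swapF i j T) := by
  apply Finset.sum_nbij' (i := fun T => swapF i j T) (j := fun T => swapF i j T)
  · intro T hT
    rw [mem_powerset] at hT ⊢
    have := swapF_subset hij hT
    rwa [swapF_swapF hij] at this
  · intro T hT
    rw [mem_powerset] at hT ⊢
    exact swapF_subset hij hT
  · intro T _; exact swapF_swapF hij T
  · intro T _; exact swapF_swapF hij T
  · intro T _; rw [swapF_swapF hij]

lemma w_swap {w : Finset ℕ → ℝ} (hsym : SymmetricIn w G.N i j) (hij : i ≠ j)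
    {S : Finset ℕ} (hS : S ⊆ G.N) : w (swapF i j S) = w S := by
  by_cases h1 : i ∈ S <;> by_cases h2 : j ∈ S
  · rw [swapF_of_other (by tauto)]
  · rw [swapF_of_left h1 h2]
    have hsub : S.erase i ⊆ G.N \ {i, j} := by
      intro x hx
      rw [mem_erase] at hx
      rw [mem_sdiff, mem_insert, mem_singleton]
      exact ⟨hS hx.2, by push_neg; exact ⟨hx.1, fun h => h2 (h ▸ hx.2)⟩⟩
    have h := hsym (S.erase i) hsub
    have h3 : insert i (S.erase i) = S := insert_erase h1
    rw [h3] at h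
    linarith
  · rw [swapF_of_right h2 h1]
    have hsub : S.erase j ⊆ G.N \ {i, j} := by
      intro x hx
      rw [mem_erase] at hx
      rw [mem_sdiff, mem_insert, mem_singleton]
      exact ⟨hS hx.2, by push_neg; exact ⟨fun h => h1 (h ▸ hx.2), hx.1⟩⟩
    have h := hsym (S.erase j) hsub
    have h3 : insert j (S.erase j) = S := insert_erase h2
    rw [h3] at h
    linarith
  · rw [swapF_of_other (by tauto)]

lemma dividend_swapF {w : Finset ℕ → ℝ} (hsym : SymmetricIn w G.N i j) (hij : i ≠ j)
    {T : Finset ℕ} (hT : T ⊆ G.N) (hiN : i ∈ G.N) (hjN : j ∈ G.N) :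
    dividend w (swapF i j T) = dividend w T := by
  unfold dividend
  rw [sum_powerset_swapF hij]
  apply sum_congr rfl
  intro S hS
  rw [mem_powerset] at hS
  have hcard : ((swapF i j T) \ (swapF i j S)).card = (T \ S).card := by
    rw [card_sdiff_of_subset (swapF_subset hij hS), card_sdiff_of_subset hS, card_swapF hij, card_swapF hij]
  rw [hcard, w_swap hsym hij (hS.trans hT)]

section OwenLemmas

noncomputable def uG (T : Finset ℕ) : Finset ℕ → ℝ := fun S => if T ⊆ S then 1 else 0

variable {G : DivGame}

lemma Owen_congr {m : ℕ} {v v' : Finset ℕ → ℝ} {B : Fin m → Finset ℕ} {i : ℕ}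
    (N : Finset ℕ) (hB : ∀ k, B k ⊆ N)
    (h : ∀ S ⊆ N, v S = v' S) : Owen m v B i = Owen m v' B i := by
  unfold Owen
  apply sum_congr rfl
  intro k hk
  rw [mem_filter] at hk
  apply sum_congr rfl
  intro R _
  apply sum_congr rfl
  intro S hS
  rw [mem_powerset] at hS
  have hQ : R.biUnion B ⊆ N := by
    intro x hx
    rw [mem_biUnion] at hx
    obtain ⟨r, _, hr⟩ := hx
    exact hB r hr
  have hSN : S ⊆ N := hS.trans ((erase_subset _ _).trans (hB k))
  have h1 : R.biUnion B ∪ S ∪ {i} ⊆ N := by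
    apply union_subset (union_subset hQ hSN)
    simp only [singleton_subset_iff]
    exact hB k hk.2
  have h2 : R.biUnion B ∪ S ⊆ N := union_subset hQ hSN
  rw [h (R.biUnion B ∪ S ∪ {i}) h1, h (R.biUnion B ∪ S) h2]

lemma Owen_linear {m : ℕ} {B : Fin m → Finset ℕ} {i : ℕ}
    (P : Finset (Finset ℕ)) (c : Finset ℕ → ℝ) :
    Owen m (fun S => ∑ T ∈ P, c T * uG T S) B i
      = ∑ T ∈ P, c T * Owen m (uG T) B i := by
  unfold Owen
  have step1 : ∀ k ∈ (univ : Finset (Fin m)).filter (fun k => i ∈ B k),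
      ∑ R ∈ ((univ : Finset (Fin m)).erase k).powerset,
        ∑ S ∈ ((B k).erase i).powerset,
        ((R.card.factorial * (m - R.card - 1).factorial : ℝ) / m.factorial) *
          ((S.card.factorial * ((B k).card - S.card - 1).factorial : ℝ) /
            (B k).card.factorial) *
          ((∑ T ∈ P, c T * uG T (R.biUnion B ∪ S ∪ {i})) - ∑ T ∈ P, c T * uG T (R.biUnion B ∪ S))
      = ∑ T ∈ P, ∑ R ∈ ((univ : Finset (Fin m)).erase k).powerset,
        ∑ S ∈ ((B k).erase i).powerset,
        c T * (((R.card.factorial * (m - R.card - 1).factorial : ℝ) / m.factorial) *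
          ((S.card.factorial * ((B k).card - S.card - 1).factorial : ℝ) /
            (B k).card.factorial) *
          (uG T (R.biUnion B ∪ S ∪ {i}) - uG T (R.biUnion B ∪ S))) := by
    intro k _
    have innerEq : ∀ R ∈ ((univ : Finset (Fin m)).erase k).powerset,
        ∀ S ∈ ((B k).erase i).powerset,
        ((R.card.factorial * (m - R.card - 1).factorial : ℝ) / m.factorial) *
          ((S.card.factorial * ((B k).card - S.card - 1).factorial : ℝ) /
            (B k).card.factorial) *
          ((∑ T ∈ P, c T * uG T (R.biUnion B ∪ S ∪ {i})) - ∑ T ∈ P, c T * uG T (R.biUnion B ∪ S))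
        = ∑ T ∈ P, c T * (((R.card.factorial * (m - R.card - 1).factorial : ℝ) / m.factorial) *
          ((S.card.factorial * ((B k).card - S.card - 1).factorial : ℝ) /
            (B k).card.factorial) *
          (uG T (R.biUnion B ∪ S ∪ {i}) - uG T (R.biUnion B ∪ S))) := by
      intro R _ S _
      rw [← sum_sub_distrib, mul_sum]
      exact sum_congr rfl fun T _ => by ring
    rw [sum_congr rfl (fun R hR => sum_congr rfl (fun S hS => innerEq R hR S hS))]
    rw [sum_congr rfl (fun R (_ : R ∈ ((univ : Finset (Fin m)).erase k).powerset) =>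
      Finset.sum_comm)]
    rw [Finset.sum_comm]
  rw [sum_congr rfl step1, Finset.sum_comm]
  apply sum_congr rfl
  intro T _
  rw [mul_sum]
  apply sum_congr rfl
  intro k _
  rw [mul_sum]
  apply sum_congr rfl
  intro R _
  rw [mul_sum]

lemma i_not_mem_QS (hG : IsGD G) {k₀ : Fin G.m} {i : ℕ} (hi : i ∈ G.B k₀)
    {R : Finset (Fin G.m)} (hR : R ⊆ univ.erase k₀)
    {S : Finset ℕ} (hS : S ⊆ (G.B k₀).erase i) :
    i ∉ R.biUnion G.B ∪ S := by
  intro h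
  rcases mem_union.1 h with h | h
  · rw [mem_biUnion] at h
    obtain ⟨r, hrR, hr⟩ := h
    have : r = k₀ := comp_unique hG hr hi
    subst this
    exact (mem_erase.1 (hR hrR)).1 rfl
  · exact (mem_erase.1 (hS h)).1 rfl

lemma uG_marginal {T X : Finset ℕ} {i : ℕ} (hiX : i ∉ X) :
    uG T (X ∪ {i}) - uG T X = if i ∈ T ∧ T.erase i ⊆ X then 1 else 0 := by
  unfold uG
  by_cases hiT : i ∈ T
  · by_cases hTX : T.erase i ⊆ X
    · have h1 : T ⊆ X ∪ {i} := by
        intro x hx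
        by_cases hxi : x = i
        · exact mem_union.2 (Or.inr (by simp [hxi]))
        · exact mem_union.2 (Or.inl (hTX (mem_erase.2 ⟨hxi, hx⟩)))
      have h2 : ¬ T ⊆ X := fun h => hiX (h hiT)
      rw [if_pos h1, if_neg h2]; simp [hiT, hTX]
    · have h2 : ¬ T ⊆ X := fun h => hTX ((erase_subset _ _).trans h)
      have h1 : ¬ T ⊆ X ∪ {i} := by
        intro h
        apply hTX
        intro x hx
        have hx' := mem_erase.1 hx
        rcases mem_union.1 (h hx'.2) with h' | h'
        · exact h'
        · exact absurd (mem_singleton.1 h') hx'.1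
      rw [if_neg h1, if_neg h2]; simp [hiT, hTX]
  · have hiff : T ⊆ X ∪ {i} ↔ T ⊆ X := by
      constructor
      · intro h x hx
        rcases mem_union.1 (h hx) with h' | h'
        · exact h'
        · exact absurd (mem_singleton.1 h' ▸ hx) hiT
      · intro h; exact h.trans subset_union_left
    rw [if_congr hiff rfl rfl, sub_self, if_neg (by tauto)]

lemma erase_subset_QS_iff (hG : IsGD G) {k₀ : Fin G.m} {i : ℕ} (hi : i ∈ G.B k₀)
    {T : Finset ℕ} (hTN : T ⊆ G.N) (hTdiv : DiverseCoal G T)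
    {R : Finset (Fin G.m)} (hR : R ⊆ univ.erase k₀)
    {S : Finset ℕ} (hS : S ⊆ (G.B k₀).erase i) :
    T.erase i ⊆ R.biUnion G.B ∪ S ↔
      (R = univ.erase k₀ ∧ (T ∩ G.B k₀).erase i ⊆ S) := by
  constructor
  · intro h
    constructor
    · apply le_antisymm hR
      intro r hr
      rw [mem_erase] at hr
      have hne : (T ∩ G.B r).Nonempty := by
        have := hTdiv r
        have h1 := (hG.2.2.2 r).1
        exact card_pos.1 (by omega)
      obtain ⟨x, hx⟩ := hne
      rw [mem_inter] at hx
      have hxi : x ≠ i := by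
        intro he
        exact hr.1 (comp_unique hG (he ▸ hx.2) hi)
      have hxQS := h (mem_erase.2 ⟨hxi, hx.1⟩)
      rcases mem_union.1 hxQS with h' | h'
      · rw [mem_biUnion] at h'
        obtain ⟨r', hr'R, hr'⟩ := h'
        rwa [comp_unique hG hx.2 hr']
      · exfalso
        have hxk₀ : x ∈ G.B k₀ := (mem_erase.1 (hS h')).2
        exact hr.1 (comp_unique hG hx.2 hxk₀)
    · intro x hx
      rw [mem_erase, mem_inter] at hx
      have hxQS := h (mem_erase.2 ⟨hx.1, hx.2.1⟩)
      rcases mem_union.1 hxQS with h' | h'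
      · exfalso
        rw [mem_biUnion] at h'
        obtain ⟨r', hr'R, hr'⟩ := h'
        have : r' = k₀ := comp_unique hG hr' hx.2.2
        subst this
        exact (mem_erase.1 (hR hr'R)).1 rfl
      · exact h'
  · rintro ⟨hRfull, hA⟩
    intro x hx
    rw [mem_erase] at hx
    have hxN : x ∈ G.N := hTN hx.2
    obtain ⟨kx, hkx, _⟩ := hG.2.2.1 x hxN
    by_cases hk : kx = k₀
    · subst hk
      exact mem_union.2 (Or.inr (hA (by rw [mem_erase, mem_inter]; exact ⟨hx.1, hx.2, hkx⟩)))
    · apply mem_union.2 (Or.inl _)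
      rw [mem_biUnion]
      exact ⟨kx, by rw [hRfull]; exact mem_erase.2 ⟨hk, mem_univ _⟩, hkx⟩

end OwenLemmas

section OwenU

variable {G : DivGame}

lemma Owen_unanimity (hG : IsGD G) {i : ℕ} {k₀ : Fin G.m} (hi : i ∈ G.B k₀)
    {T : Finset ℕ} (hTN : T ⊆ G.N) (hTdiv : DiverseCoal G T) :
    Owen G.m (uG T) G.B i =
      if i ∈ T then 1 / ((G.m : ℝ) * (((T ∩ G.B k₀).card : ℕ) : ℝ)) else 0 := by
  unfold Owen
  rw [filter_comp hG hi, sum_singleton]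
  by_cases hiT : i ∈ T
  · rw [if_pos hiT]
    set A := (T ∩ G.B k₀).erase i with hA
    have hAsub : A ⊆ (G.B k₀).erase i := by
      intro x hx
      rw [hA, mem_erase, mem_inter] at hx
      exact mem_erase.2 ⟨hx.1, hx.2.2⟩
    have stepA : ∀ R ∈ ((univ : Finset (Fin G.m)).erase k₀).powerset,
        ∀ S ∈ ((G.B k₀).erase i).powerset,
        ((R.card.factorial * (G.m - R.card - 1).factorial : ℝ) / G.m.factorial) *
          ((S.card.factorial * ((G.B k₀).card - S.card - 1).factorial : ℝ) /
            (G.B k₀).card.factorial) *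
          (uG T (R.biUnion G.B ∪ S ∪ {i}) - uG T (R.biUnion G.B ∪ S))
        = ((R.card.factorial * (G.m - R.card - 1).factorial : ℝ) / G.m.factorial) *
          ((S.card.factorial * ((G.B k₀).card - S.card - 1).factorial : ℝ) /
            (G.B k₀).card.factorial) *
          (if R = univ.erase k₀ ∧ A ⊆ S then 1 else 0) := by
      intro R hR S hS
      rw [mem_powerset] at hR hS
      rw [uG_marginal (i_not_mem_QS hG hi hR hS)]
      have hiff : (i ∈ T ∧ T.erase i ⊆ R.biUnion G.B ∪ S) ↔
          (R = univ.erase k₀ ∧ A ⊆ S) := by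
        rw [and_iff_right hiT]
        exact erase_subset_QS_iff hG hi hTN hTdiv hR hS
      simp only [hiff]
    rw [sum_congr rfl (fun R hR => sum_congr rfl (fun S hS => stepA R hR S hS))]
    rw [Finset.sum_eq_single_of_mem (univ.erase k₀) (mem_powerset.2 (Finset.Subset.refl _))
      (fun R _ hRne => sum_eq_zero fun S _ => by
        rw [if_neg (fun hc => hRne hc.1), mul_zero])]
    have hstep : ∀ S ∈ ((G.B k₀).erase i).powerset,
        ((((univ : Finset (Fin G.m)).erase k₀).card.factorial *
            (G.m - ((univ : Finset (Fin G.m)).erase k₀).card - 1).factorial : ℝ) / G.m.factorial) *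
          ((S.card.factorial * ((G.B k₀).card - S.card - 1).factorial : ℝ) /
            (G.B k₀).card.factorial) *
          (if ((univ : Finset (Fin G.m)).erase k₀) = univ.erase k₀ ∧ A ⊆ S then 1 else 0)
        = (1/(G.m:ℝ)) * (if A ⊆ S then
            ((S.card.factorial * ((G.B k₀).card - S.card - 1).factorial : ℝ) /
              (G.B k₀).card.factorial) else 0) := by
      intro S _
      have hcardR : ((univ : Finset (Fin G.m)).erase k₀).card = G.m - 1 := by
        rw [card_erase_of_mem (mem_univ _), card_univ, Fintype.card_fin]
      have hm1 : 0 < G.m := Fin.pos k₀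
      have h0 : G.m - (G.m - 1) - 1 = 0 := by omega
      rw [hcardR, h0]
      have hmfac : (G.m.factorial : ℝ) = (G.m : ℝ) * ((G.m - 1).factorial : ℝ) := by
        have h2 := Nat.factorial_succ (G.m - 1)
        have h3 : G.m - 1 + 1 = G.m := by omega
        rw [h3] at h2
        rw [h2]
        push_cast
        ring
      simp only [eq_self_iff_true, true_and, Nat.factorial_zero]
      by_cases hAS : A ⊆ S
      · rw [if_pos hAS, if_pos hAS, hmfac]
        have hf1 : ((G.m - 1).factorial : ℝ) ≠ 0 := by positivity
        have hf2 : (G.m : ℝ) ≠ 0 := by positivity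
        field_simp
        ring
      · rw [if_neg hAS, if_neg hAS]
        ring
    rw [sum_congr rfl hstep, ← mul_sum, ← sum_filter,
      shap_sum (G.B k₀) i hi A hAsub]
    have hicard : i ∈ T ∩ G.B k₀ := mem_inter.2 ⟨hiT, hi⟩
    have hcA : A.card + 1 = (T ∩ G.B k₀).card := by
      rw [hA, card_erase_of_mem hicard]
      have := card_pos.2 ⟨i, hicard⟩
      omega
    rw [← hcA]
    push_cast
    rw [div_mul_div_comm, one_mul]
  · rw [if_neg hiT]
    apply sum_eq_zero
    intro R hR
    apply sum_eq_zero
    intro S hS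
    rw [mem_powerset] at hR hS
    rw [uG_marginal (i_not_mem_QS hG hi hR hS), if_neg (by tauto), mul_zero]

end OwenU

section Bridge

variable {G : DivGame}

lemma repr_N {v : Finset ℕ → ℝ} {N S : Finset ℕ} (hS : S ⊆ N) :
    v S = ∑ T ∈ N.powerset, dividend v T * uG T S := by
  have h1 : ∀ T ∈ N.powerset, dividend v T * uG T S
      = if T ⊆ S then dividend v T else 0 := by
    intro T _
    unfold uG
    by_cases h : T ⊆ S <;> simp [h]
  rw [sum_congr rfl h1, ← sum_filter]
  have h2 : N.powerset.filter (fun T => T ⊆ S) = S.powerset := by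
    ext T
    simp only [mem_filter, mem_powerset]
    exact ⟨fun h => h.2, fun h => ⟨h.trans hS, h⟩⟩
  rw [h2, sum_dividend]

lemma Owen_eq_formula (hG : IsGD G) {i : ℕ} {k₀ : Fin G.m} (hi : i ∈ G.B k₀)
    {v : Finset ℕ → ℝ}
    (hdv : ∀ T ⊆ G.N, ¬ DiverseCoal G T → dividend v T = 0) :
    Owen G.m v G.B i = ∑ T ∈ G.N.powerset, dividend v T *
      (if i ∈ T then 1 / ((G.m : ℝ) * (((T ∩ G.B k₀).card : ℕ) : ℝ)) else 0) := by
  calc Owen G.m v G.B i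
      = Owen G.m (fun S => ∑ T ∈ G.N.powerset, dividend v T * uG T S) G.B i :=
        Owen_congr G.N hG.2.1 (fun S hS => repr_N hS)
    _ = ∑ T ∈ G.N.powerset, dividend v T * Owen G.m (uG T) G.B i :=
        Owen_linear _ _
    _ = _ := by
        apply sum_congr rfl
        intro T hT
        rw [mem_powerset] at hT
        by_cases hd : DiverseCoal G T
        · rw [Owen_unanimity hG hi hT hd]
        · rw [hdv T hT hd, zero_mul, zero_mul]

lemma dividend_rg_nondiverse {T : Finset ℕ} (hnd : ¬ DiverseCoal G T) :
    dividend (restrictedGame G) T = 0 := by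
  unfold dividend
  apply sum_eq_zero
  intro S hS
  rw [mem_powerset] at hS
  have : restrictedGame G S = 0 := by
    unfold restrictedGame
    rw [if_neg (fun h => hnd (diverse_mono hS h))]
  rw [this, mul_zero]

lemma DOw_formula (hG : IsGD G) {i : ℕ} {k₀ : Fin G.m} (hi : i ∈ G.B k₀) :
    DOw G i = ∑ T ∈ G.N.powerset, dividend (restrictedGame G) T *
      (if i ∈ T then 1 / ((G.m : ℝ) * (((T ∩ G.B k₀).card : ℕ) : ℝ)) else 0) :=
  Owen_eq_formula hG hi (fun T _ hnd => dividend_rg_nondiverse hnd)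

lemma rg_N (hG : IsGD G) : restrictedGame G G.N = G.v G.N := by
  unfold restrictedGame
  rw [if_pos (diverse_N hG)]

lemma DOw_comp_sum (hG : IsGD G) (p : Fin G.m) :
    ∑ i ∈ G.B p, DOw G i = G.v G.N / (G.m : ℝ) := by
  have h1 : ∀ i ∈ G.B p, DOw G i
      = ∑ T ∈ G.N.powerset, dividend (restrictedGame G) T *
        (if i ∈ T then 1 / ((G.m : ℝ) * (((T ∩ G.B p).card : ℕ) : ℝ)) else 0) :=
    fun i hi => DOw_formula hG hi
  rw [sum_congr rfl h1, Finset.sum_comm]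
  have h2 : ∀ T ∈ G.N.powerset,
      ∑ i ∈ G.B p, dividend (restrictedGame G) T *
        (if i ∈ T then 1 / ((G.m : ℝ) * (((T ∩ G.B p).card : ℕ) : ℝ)) else 0)
      = dividend (restrictedGame G) T * (1 / (G.m : ℝ)) := by
    intro T _
    by_cases hd : DiverseCoal G T
    · have h3 : ∀ i ∈ G.B p, dividend (restrictedGame G) T *
          (if i ∈ T then 1 / ((G.m : ℝ) * (((T ∩ G.B p).card : ℕ) : ℝ)) else 0)
          = if i ∈ T then dividend (restrictedGame G) T *
              (1 / ((G.m : ℝ) * (((T ∩ G.B p).card : ℕ) : ℝ))) else 0 := by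
        intro i _
        by_cases h : i ∈ T <;> simp [h]
      rw [sum_congr rfl h3, ← sum_filter, filter_mem_eq_inter, sum_const, nsmul_eq_mul]
      have hcard : ((G.B p ∩ T).card : ℕ) = (T ∩ G.B p).card := by rw [inter_comm]
      rw [hcard]
      have hpos : 0 < (T ∩ G.B p).card := by
        have := hd p
        have := (hG.2.2.2 p).1
        omega
      have hc : ((T ∩ G.B p).card : ℝ) ≠ 0 := by positivity
      have hm : (G.m : ℝ) ≠ 0 := by
        have : 0 < G.m := Fin.pos p
        positivity
      field_simp
    · rw [dividend_rg_nondiverse hd]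
      simp
  rw [sum_congr rfl h2, ← sum_mul, sum_dividend, rg_N hG]
  ring

lemma Owen_add {m : ℕ} {B : Fin m → Finset ℕ} {i : ℕ} (v1 v2 : Finset ℕ → ℝ) :
    Owen m (fun S => v1 S + v2 S) B i = Owen m v1 B i + Owen m v2 B i := by
  unfold Owen
  rw [← sum_add_distrib]
  apply sum_congr rfl
  intro k _
  rw [← sum_add_distrib]
  apply sum_congr rfl
  intro R _
  rw [← sum_add_distrib]
  apply sum_congr rfl
  intro S _
  ring

end Bridge

section Axioms

variable {G : DivGame}

lemma rg_gameWith (v : Finset ℕ → ℝ) (S : Finset ℕ) :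
    restrictedGame (gameWith G v) S = if DiverseCoal G S then v S else 0 := rfl

lemma N_empty_of_m_zero (hG : IsGD G) (hm : G.m = 0) : G.N = ∅ := by
  by_contra h
  obtain ⟨i, hi⟩ := nonempty_iff_ne_empty.2 h
  obtain ⟨k, _, _⟩ := hG.2.2.1 i hi
  exact absurd k.2 (by omega)

theorem DOw_efficiency : Efficiency DOw := by
  intro G hG
  by_cases hm : G.m = 0
  · have hN := N_empty_of_m_zero hG hm
    rw [hN, sum_empty]
    exact hG.1.symm
  · rw [sum_over_N hG]
    have h1 : ∀ k : Fin G.m, ∑ i ∈ G.B k, DOw G i = G.v G.N / (G.m : ℝ) :=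
      fun k => DOw_comp_sum hG k
    rw [sum_congr rfl (fun k _ => h1 k), sum_const, card_univ, Fintype.card_fin,
      nsmul_eq_mul]
    have : (G.m : ℝ) ≠ 0 := Nat.cast_ne_zero.2 hm
    field_simp

lemma rg_gameWith_add (v w : Finset ℕ → ℝ) (S : Finset ℕ) :
    restrictedGame (gameWith G (v + w)) S
      = restrictedGame (gameWith G v) S + restrictedGame (gameWith G w) S := by
  rw [rg_gameWith, rg_gameWith, rg_gameWith]
  by_cases h : DiverseCoal G S
  · rw [if_pos h, if_pos h, if_pos h]; rfl
  · rw [if_neg h, if_neg h, if_neg h]; ring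

theorem DOw_FD : FD DOw := by
  intro G v w hGv hGw p q
  have hGvw : IsGD (gameWith G (v + w)) := by
    refine ⟨?_, hGv.2⟩
    show (v + w) ∅ = 0
    have h2 : (v + w) ∅ = v ∅ + w ∅ := rfl
    have hv0 : v ∅ = 0 := hGv.1
    have hw0 : w ∅ = 0 := hGw.1
    rw [h2, hv0, hw0, add_zero]
  have h1 : ∀ (x : Finset ℕ → ℝ), IsGD (gameWith G x) → ∀ (r : Fin G.m),
      ∑ i ∈ G.B r, DOw (gameWith G x) i = x G.N / (G.m : ℝ) :=
    fun x hx r => DOw_comp_sum hx r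
  rw [h1 (v+w) hGvw p, h1 (v+w) hGvw q, h1 w hGw p, h1 w hGw q]

lemma symmetric_rg {v : Finset ℕ → ℝ} {i j : ℕ} {p : Fin G.m}
    (hG : IsGD G) (hi : i ∈ G.B p) (hj : j ∈ G.B p) (hij : i ≠ j)
    (hsym : SymmetricIn v G.N i j) :
    SymmetricIn (restrictedGame (gameWith G v)) G.N i j := by
  intro S hS
  have hiS : i ∉ S := fun h => by simpa using (mem_sdiff.1 (hS h)).2
  have hjS : j ∉ S := fun h => by simpa using (mem_sdiff.1 (hS h)).2
  have hswap : swapF i j (insert i S) = insert j S := by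
    rw [swapF_of_left (mem_insert_self i S) (by simp [hjS, Ne.symm hij]),
      erase_insert hiS]
  have hdiv : DiverseCoal G (insert i S) ↔ DiverseCoal G (insert j S) := by
    constructor
    · intro h
      rw [← hswap]
      exact diverse_swapF hG hi hj h
    · intro h
      have hswap' : swapF j i (insert j S) = insert i S := by
        rw [swapF_of_left (mem_insert_self j S) (by simp [hiS, hij]),
          erase_insert hjS]
      rw [← hswap']
      exact diverse_swapF hG hj hi h
  have hval : v (insert i S) = v (insert j S) := by
    have := hsym S hS
    linarith
  rw [rg_gameWith, rg_gameWith, rg_gameWith]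
  by_cases hd : DiverseCoal G (insert i S)
  · rw [if_pos hd, if_pos (hdiv.1 hd), hval]
  · rw [if_neg hd, if_neg (fun h => hd (hdiv.2 h))]

lemma Owen_symm_of_symmetric {v : Finset ℕ → ℝ} {i j : ℕ} {p : Fin G.m}
    (hG : IsGD G) (hi : i ∈ G.B p) (hj : j ∈ G.B p) (hij : i ≠ j)
    (hsym : SymmetricIn v G.N i j)
    (hdv : ∀ T ⊆ G.N, ¬ DiverseCoal G T → dividend v T = 0) :
    Owen G.m v G.B i = Owen G.m v G.B j := by
  have hiN : i ∈ G.N := hG.2.1 p hi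
  have hjN : j ∈ G.N := hG.2.1 p hj
  rw [Owen_eq_formula hG hi hdv, Owen_eq_formula hG hj hdv]
  apply Finset.sum_nbij' (i := fun T => swapF i j T) (j := fun T => swapF i j T)
  · intro T hT
    rw [mem_powerset] at hT ⊢
    exact swapF_subset_N hij hT hiN hjN
  · intro T hT
    rw [mem_powerset] at hT ⊢
    exact swapF_subset_N hij hT hiN hjN
  · intro T _; exact swapF_swapF hij T
  · intro T _; exact swapF_swapF hij T
  · intro T hT
    rw [mem_powerset] at hT
    rw [dividend_swapF hsym hij hT hiN hjN]
    congr 1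
    have hmem : (j ∈ swapF i j T) ↔ (i ∈ T) := by
      by_cases h1 : i ∈ T <;> by_cases h2 : j ∈ T
      · rw [swapF_of_other (by tauto)]; tauto
      · rw [swapF_of_left h1 h2]; simp [h1]
      · rw [swapF_of_right h2 h1]; simp [h1, h2, Ne.symm hij]
      · rw [swapF_of_other (by tauto)]; tauto
    have hcard : ((swapF i j T ∩ G.B p).card : ℕ) = (T ∩ G.B p).card :=
      card_inter_swapF hG hi hj T p
    by_cases h : i ∈ T
    · rw [if_pos h, if_pos (hmem.2 h), hcard]
    · rw [if_neg h, if_neg (fun hc => h (hmem.1 hc))]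

lemma FwC_helper (G : DivGame) (hG : IsGD G) (v w : Finset ℕ → ℝ)
    (hv0 : v ∅ = 0) (p : Fin G.m) (i : ℕ) (hi : i ∈ G.B p) (j : ℕ) (hj : j ∈ G.B p)
    (hsym : SymmetricIn v G.N i j) :
    DOw (gameWith G (v + w)) i - DOw (gameWith G w) i =
      DOw (gameWith G (v + w)) j - DOw (gameWith G w) j := by
  by_cases hij : i = j
  · subst hij; ring
  have key : ∀ (x : Finset ℕ → ℝ) (i' : ℕ),
      DOw (gameWith G x) i' = Owen G.m (restrictedGame (gameWith G x)) G.B i' :=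
    fun _ _ => rfl
  have hfun : restrictedGame (gameWith G (v + w))
      = fun S => restrictedGame (gameWith G v) S + restrictedGame (gameWith G w) S :=
    funext (rg_gameWith_add v w)
  have hsplit : ∀ i' : ℕ,
      DOw (gameWith G (v + w)) i' - DOw (gameWith G w) i'
        = Owen G.m (restrictedGame (gameWith G v)) G.B i' := by
    intro i'
    rw [key, key, hfun, Owen_add]
    ring
  rw [hsplit i, hsplit j]
  apply Owen_symm_of_symmetric hG hi hj hij (symmetric_rg hG hi hj hij hsym)
  intro T hT hnd
  exact dividend_rg_nondiverse (G := gameWith G v) hnd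

theorem DOw_FwC : FwC DOw := by
  intro G v w hGv hGw p i hi j hj hsym
  exact FwC_helper (gameWith G v) hGv v w hGv.1 p i hi j hj hsym

theorem DOw_INDC : INDC DOw := by
  intro G v w hGv hGw hagree i hiN
  have key : ∀ (x : Finset ℕ → ℝ) (i' : ℕ),
      DOw (gameWith G x) i' = Owen G.m (restrictedGame (gameWith G x)) G.B i' :=
    fun _ _ => rfl
  rw [key, key]
  apply Owen_congr G.N hGv.2.1
  intro S hS
  rw [rg_gameWith, rg_gameWith]
  by_cases hd : DiverseCoal G S
  · rw [if_pos hd, if_pos hd, hagree S hS hd]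
  · rw [if_neg hd, if_neg hd]

theorem DOw_ND : ND DOw := by
  intro G hG hdiv i hiN hnull
  unfold DOw Owen
  apply sum_eq_zero
  intro k hk
  rw [mem_filter] at hk
  apply sum_eq_zero
  intro R hR
  apply sum_eq_zero
  intro S hS
  rw [mem_powerset] at hR hS
  have hnm := i_not_mem_QS hG hk.2 hR hS
  set X := R.biUnion G.B ∪ S with hX
  have hXN : X ⊆ G.N := by
    apply union_subset
    · intro x hx
      rw [mem_biUnion] at hx
      obtain ⟨r, _, hr⟩ := hx
      exact hG.2.1 r hr
    · exact hS.trans ((erase_subset _ _).trans (hG.2.1 k))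
  have hXi : X ∪ {i} = insert i X := by
    ext x; simp [or_comm]
  have hvX : restrictedGame G X = G.v X := by
    unfold restrictedGame
    by_cases hd : DiverseCoal G X
    · rw [if_pos hd]
    · rw [if_neg hd]
      by_contra h
      exact hd (hdiv X hXN (fun hc => h hc.symm))
  have hmarg : restrictedGame G (X ∪ {i}) - restrictedGame G X = 0 := by
    rw [hXi]
    by_cases hd : DiverseCoal G (insert i X)
    · have h1 : restrictedGame G (insert i X) = G.v X := by
        unfold restrictedGame
        rw [if_pos hd]
        exact hnull X ((subset_erase).2 ⟨hXN, hnm⟩)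
      rw [h1, hvX, sub_self]
    · have hXnd : ¬ DiverseCoal G X :=
        fun h => hd (diverse_mono (subset_insert i X) h)
      have h1 : restrictedGame G (insert i X) = 0 := by
        unfold restrictedGame; rw [if_neg hd]
      have h2 : restrictedGame G X = 0 := by
        unfold restrictedGame; rw [if_neg hXnd]
      rw [h1, h2, sub_zero]
  rw [hmarg, mul_zero]

end Axioms

section Uniqueness

noncomputable def Dset (G : DivGame) : Finset (Finset ℕ) :=
  G.N.powerset.filter (fun T => dividend G.v T ≠ 0)

lemma comp_sum_of_axioms (f : Value) (hE : Efficiency f) (hFD : FD f) (hND : ND f)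
    (G : DivGame) (hG : IsGD G) (p : Fin G.m) :
    ∑ i ∈ G.B p, f G i = G.v G.N / (G.m : ℝ) := by
  have hG0 : IsGD (gameWith G (fun _ => (0:ℝ))) := ⟨rfl, hG.2⟩
  have hzero : ∀ j ∈ G.N, f (gameWith G (fun _ => (0:ℝ))) j = 0 := by
    intro j hj
    exact hND _ hG0 (fun S _ hne => absurd rfl hne) j hj (fun S _ => rfl)
  have hFD' := hFD G G.v (fun _ => (0:ℝ)) ⟨hG.1, hG.2⟩ hG0
  have hgw : gameWith G (G.v + fun _ => (0:ℝ)) = G := by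
    have hvadd : (G.v + fun _ => (0:ℝ)) = G.v := by funext S; simp
    rw [hvadd]
    rfl
  rw [hgw] at hFD'
  have hzsum : ∀ r : Fin G.m, ∑ i ∈ G.B r, f (gameWith G (fun _ => (0:ℝ))) i = 0 :=
    fun r => sum_eq_zero (fun j hj => hzero j (hG.2.1 r hj))
  have hsame : ∀ k : Fin G.m, ∑ i ∈ G.B k, f G i = ∑ i ∈ G.B p, f G i := by
    intro k
    have h := hFD' k p
    rw [hzsum k, hzsum p] at h
    linarith
  have hE' := hE G hG
  rw [sum_over_N hG, sum_congr rfl (fun k (_ : k ∈ (univ : Finset (Fin G.m))) => hsame k),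
    sum_const, card_univ, Fintype.card_fin, nsmul_eq_mul] at hE'
  have hm : (G.m:ℝ) ≠ 0 := by
    have := Fin.pos p
    positivity
  field_simp
  linarith [hE']

lemma null_of_dividend (v : Finset ℕ → ℝ) (N : Finset ℕ) (i : ℕ) (hiN : i ∈ N)
    (h : ∀ T ∈ N.powerset, i ∈ T → dividend v T = 0) : NullPlayerIn v N i := by
  intro S hS
  have hiS : i ∉ S := fun hc => (mem_erase.1 (hS hc)).1 rfl
  have hSN : S ⊆ N := hS.trans (erase_subset _ _)
  have hsub : insert i S ⊆ N := insert_subset hiN hSN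
  rw [← sum_dividend v (insert i S), ← sum_dividend v S, powerset_insert]
  rw [sum_union (Finset.disjoint_left.mpr (fun T hT1 hT2 => by
    obtain ⟨T', _, rfl⟩ := mem_image.1 hT2
    exact hiS (mem_powerset.1 hT1 (mem_insert_self i T'))))]
  have h2 : ∑ T ∈ S.powerset.image (insert i), dividend v T = 0 := by
    apply sum_eq_zero
    intro T hT
    obtain ⟨T', hT', rfl⟩ := mem_image.1 hT
    apply h _ _ (mem_insert_self i T')
    rw [mem_powerset]
    exact insert_subset_insert i (mem_powerset.1 hT') |>.trans hsub
  rw [h2, add_zero]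

end Uniqueness

section Main

lemma main_agree (f g : Value)
    (hEf : Efficiency f) (hFwCf : FwC f) (hFDf : FD f) (hNDf : ND f)
    (hEg : Efficiency g) (hFwCg : FwC g) (hFDg : FD g) (hNDg : ND g) :
    ∀ k1 k2 : ℕ, ∀ G, IsGD G → IsDiverseGame G →
      (Dset G).card ≤ k1 → ((Dset G).biUnion id).card ≤ k2 →
      ∀ i ∈ G.N, f G i = g G i := by
  intro k1
  induction k1 using Nat.strong_induction_on with
  | _ k1 ih1 =>
  intro k2
  induction k2 using Nat.strong_induction_on with
  | _ k2 ih2 =>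
  intro G hG hdiv hDcard hUcard i hiN
  classical
  set c : Finset ℕ → ℝ := dividend G.v with hc
  set D : Finset (Finset ℕ) := Dset G with hD
  set U : Finset ℕ := D.biUnion id with hU
  have hDdiv : ∀ T ∈ D, DiverseCoal G T := by
    intro T hT
    rw [hD, Dset, mem_filter, mem_powerset] at hT
    by_contra hnd
    exact hT.2 (dividend_nondiverse hG hdiv hT.1 hnd)
  have hDsubN : ∀ T ∈ D, T ⊆ G.N := by
    intro T hT
    rw [hD, Dset, mem_filter, mem_powerset] at hT
    exact hT.1
  have hnull_val : ∀ j ∈ G.N, j ∉ U → (f G j = 0 ∧ g G j = 0) := by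
    intro j hjN hjU
    have hnull : NullPlayerIn G.v G.N j := by
      apply null_of_dividend _ _ _ hjN
      intro T hT hjT
      by_contra hcne
      exact hjU (mem_biUnion.2 ⟨T, by rw [hD, Dset, mem_filter]; exact ⟨hT, hcne⟩, hjT⟩)
    exact ⟨hNDf G hG hdiv j hjN hnull, hNDg G hG hdiv j hjN hnull⟩
  obtain ⟨p, hip, _⟩ := hG.2.2.1 i hiN
  by_cases hiU : i ∈ U
  swap
  · rw [(hnull_val i hiN hiU).1, (hnull_val i hiN hiU).2]
  have hdiffstep : ∀ j ∈ G.B p, j ∈ U → j ≠ i → f G i - g G i = f G j - g G j := by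
    intro j hjp hjU hji
    have hij : i ≠ j := Ne.symm hji
    have hjN : j ∈ G.N := hG.2.1 p hjp
    -- the auxiliary game w
    set e : Finset ℕ → ℝ :=
      fun T => if i ∈ T ∧ j ∉ T ∧ T ⊆ G.N then c T - c (swapF i j T) else 0 with he
    set w : Finset ℕ → ℝ := fun S => ∑ T ∈ S.powerset, e T with hw
    have hdw : ∀ T, dividend w T = e T := dividend_eq_of_repr w e (fun S => rfl)
    have hw0 : w ∅ = 0 := by
      rw [hw]
      simp only [powerset_empty, sum_singleton]
      rw [he]
      simp
    have hGw : IsGD (gameWith G w) := ⟨hw0, hG.2⟩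
    have hesupp : ∀ T, e T ≠ 0 →
        i ∈ T ∧ j ∉ T ∧ T ⊆ G.N ∧ (T ∈ D ∨ swapF i j T ∈ D) := by
      intro T hT
      simp only [he] at hT
      by_cases hcond : i ∈ T ∧ j ∉ T ∧ T ⊆ G.N
      · refine ⟨hcond.1, hcond.2.1, hcond.2.2, ?_⟩
        rw [if_pos hcond] at hT
        by_cases h1 : c T ≠ 0
        · exact Or.inl (by rw [hD, Dset, mem_filter, mem_powerset]; exact ⟨hcond.2.2, h1⟩)
        · push_neg at h1
          have h2 : c (swapF i j T) ≠ 0 := fun hcc => hT (by rw [h1, hcc, sub_zero])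
          refine Or.inr (by
            rw [hD, Dset, mem_filter, mem_powerset]
            exact ⟨swapF_subset_N hij hcond.2.2 hiN hjN, h2⟩)
      · rw [if_neg hcond] at hT
        exact absurd rfl hT
    have hwdiverse : IsDiverseGame (gameWith G w) := by
      intro S hSN hne
      have hne' : w S ≠ 0 := hne
      obtain ⟨T, hTmem, hTe⟩ := exists_ne_zero_of_sum_ne_zero (by rw [hw] at hne'; exact hne')
      obtain ⟨hiT, hjT, hTN, hTD⟩ := hesupp T hTe
      have hTdiv : DiverseCoal G T := by
        rcases hTD with h | h
        · exact hDdiv T h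
        · have h2 := diverse_swapF hG hip hjp (hDdiv _ h)
          rwa [swapF_swapF hij] at h2
      exact diverse_mono (mem_powerset.1 hTmem) hTdiv
    -- symmetry of v - w in i and j
    have hce : ∀ T, T ⊆ G.N →
        c T - e T = c (swapF i j T) - e (swapF i j T) := by
      intro T hTN
      by_cases h1 : i ∈ T <;> by_cases h2 : j ∈ T
      · rw [swapF_of_other (by tauto)]
      · have hσ := mem_swapF_left hij h1 h2
        have heT : e T = c T - c (swapF i j T) := by
          simp only [he]
          rw [if_pos ⟨h1, h2, hTN⟩]
        have heσ : e (swapF i j T) = 0 := by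
          simp only [he]
          rw [if_neg (fun hcc => hσ.2 hcc.1)]
        rw [heT, heσ]
        ring
      · have hσmem := mem_swapF_left (Ne.symm hij) h2 h1
        have hσeq : swapF j i T = swapF i j T := by
          rw [swapF_of_right h2 h1, swapF_of_left (i := j) (j := i) h2 h1]
        rw [hσeq] at hσmem
        have heT : e T = 0 := by
          simp only [he]
          rw [if_neg (fun hcc => h1 hcc.1)]
        have heσ : e (swapF i j T) = c (swapF i j T) - c (swapF i j (swapF i j T)) := by
          simp only [he]
          rw [if_pos ⟨hσmem.1, hσmem.2, swapF_subset_N hij hTN hiN hjN⟩]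
        rw [heT, heσ, swapF_swapF hij]
        ring
      · rw [swapF_of_other (by tauto)]
    have hvw_repr : ∀ X : Finset ℕ, G.v X - w X = ∑ T ∈ X.powerset, (c T - e T) := by
      intro X
      rw [← sum_dividend G.v X, hw, ← sum_sub_distrib]
    have hsymvw : SymmetricIn (fun S => G.v S - w S) G.N i j := by
      intro S hS
      have hiS : i ∉ S := fun h => by simpa using (mem_sdiff.1 (hS h)).2
      have hjS : j ∉ S := fun h => by simpa using (mem_sdiff.1 (hS h)).2
      have hSN : S ⊆ G.N := hS.trans (sdiff_subset)
      have hswap : swapF i j (insert i S) = insert j S := by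
        rw [swapF_of_left (mem_insert_self i S) (by simp [hjS, Ne.symm hij]),
          erase_insert hiS]
      have hmain : G.v (insert i S) - w (insert i S) = G.v (insert j S) - w (insert j S) := by
        rw [hvw_repr, hvw_repr, ← hswap, sum_powerset_swapF hij]
        apply sum_congr rfl
        intro T hT
        rw [mem_powerset] at hT
        exact (hce T (hT.trans (insert_subset hiN hSN)))
      dsimp only
      linarith
    -- bounds on the new game
    have hDw_eq : Dset (gameWith G w) = G.N.powerset.filter (fun T => e T ≠ 0) := by
      unfold Dset
      apply filter_congr
      intro T _
      rw [show (gameWith G w).v = w from rfl, hdw T]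
    have hDwsub : Dset (gameWith G w) ⊆
        (D.filter (fun T => i ∈ T ∧ j ∉ T)) ∪
          (D.filter (fun T => j ∈ T ∧ i ∉ T)).image (swapF i j) := by
      intro T hT
      rw [hDw_eq, mem_filter] at hT
      obtain ⟨hiT, hjT, hTN, hTD⟩ := hesupp T hT.2
      rcases hTD with h | h
      · exact mem_union_left _ (mem_filter.2 ⟨h, hiT, hjT⟩)
      · apply mem_union_right
        rw [mem_image]
        refine ⟨swapF i j T, mem_filter.2 ⟨h, ?_⟩, swapF_swapF hij T⟩
        exact mem_swapF_left hij hiT hjT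
    have hP12disj : Disjoint (D.filter (fun T => i ∈ T ∧ j ∉ T))
        (D.filter (fun T => j ∈ T ∧ i ∉ T)) := by
      apply Finset.disjoint_left.mpr
      intro T h1 h2
      rw [mem_filter] at h1 h2
      exact h2.2.2 h1.2.1
    have hDwcard : (Dset (gameWith G w)).card ≤
        ((D.filter (fun T => i ∈ T ∧ j ∉ T)) ∪ (D.filter (fun T => j ∈ T ∧ i ∉ T))).card := by
      calc (Dset (gameWith G w)).card
          ≤ ((D.filter (fun T => i ∈ T ∧ j ∉ T)) ∪
              (D.filter (fun T => j ∈ T ∧ i ∉ T)).image (swapF i j)).card :=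
            card_le_card hDwsub
        _ ≤ (D.filter (fun T => i ∈ T ∧ j ∉ T)).card +
              ((D.filter (fun T => j ∈ T ∧ i ∉ T)).image (swapF i j)).card :=
            card_union_le _ _
        _ ≤ (D.filter (fun T => i ∈ T ∧ j ∉ T)).card +
              (D.filter (fun T => j ∈ T ∧ i ∉ T)).card := by
            have := card_image_le (s := D.filter (fun T => j ∈ T ∧ i ∉ T)) (f := swapF i j)
            omega
        _ = _ := (card_union_of_disjoint hP12disj).symm
    have hsubD : (D.filter (fun T => i ∈ T ∧ j ∉ T)) ∪
        (D.filter (fun T => j ∈ T ∧ i ∉ T)) ⊆ D :=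
      union_subset (filter_subset _ _) (filter_subset _ _)
    -- the IH gives agreement on the auxiliary game
    have hIH : f (gameWith G w) i = g (gameWith G w) i ∧
        f (gameWith G w) j = g (gameWith G w) j := by
      by_cases hsep : ∀ T ∈ D, (i ∈ T ∧ j ∉ T) ∨ (j ∈ T ∧ i ∉ T)
      · -- all separating: support shrinks
        have hUw : (Dset (gameWith G w)).biUnion id ⊆ U.erase j := by
          intro x hx
          rw [mem_biUnion] at hx
          obtain ⟨T, hT, hxT⟩ := hx
          have hT' := hDwsub hT
          rcases mem_union.1 hT' with h | h
          · rw [mem_filter] at h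
            refine mem_erase.2 ⟨fun hxj => h.2.2 (hxj ▸ hxT), ?_⟩
            exact mem_biUnion.2 ⟨T, h.1, hxT⟩
          · obtain ⟨V, hV, rfl⟩ := mem_image.1 h
            rw [mem_filter] at hV
            have hVform : swapF i j V = insert i (V.erase j) :=
              swapF_of_right hV.2.1 hV.2.2
            rw [hVform] at hxT
            rcases mem_insert.1 hxT with rfl | hxV
            · exact mem_erase.2 ⟨hij, hiU⟩
            · rw [mem_erase] at hxV
              exact mem_erase.2 ⟨hxV.1, mem_biUnion.2 ⟨V, hV.1, hxV.2⟩⟩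
        have hjU' : j ∈ U := hjU
        have hUcard' : ((Dset (gameWith G w)).biUnion id).card ≤ k2 - 1 := by
          have h1 := card_le_card hUw
          have h2 : (U.erase j).card = U.card - 1 := card_erase_of_mem hjU'
          have h3 : 1 ≤ U.card := card_pos.2 ⟨j, hjU'⟩
          omega
        have hk2pos : 1 ≤ k2 := by
          have h3 : 1 ≤ U.card := card_pos.2 ⟨j, hjU⟩
          omega
        have hDwcard' : (Dset (gameWith G w)).card ≤ k1 := by
          have := card_le_card hsubD
          omega
        have happ := ih2 (k2 - 1) (by omega) (gameWith G w) hGw hwdiverse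
          hDwcard' hUcard'
        exact ⟨happ i hiN, happ j hjN⟩
      · -- some non-separating set: dividend count shrinks
        push_neg at hsep
        obtain ⟨T₀, hT₀D, hT₀⟩ := hsep
        have hssub : (D.filter (fun T => i ∈ T ∧ j ∉ T)) ∪
            (D.filter (fun T => j ∈ T ∧ i ∉ T)) ⊆ D.erase T₀ := by
          intro T hT
          refine mem_erase.2 ⟨?_, hsubD hT⟩
          rintro rfl
          rcases mem_union.1 hT with h | h <;> rw [mem_filter] at h
          · exact h.2.2 (hT₀.1 h.2.1)
          · exact h.2.2 (hT₀.2 h.2.1)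
        have hDwcard' : (Dset (gameWith G w)).card < k1 := by
          have h1 := card_le_card hssub
          have h2 : (D.erase T₀).card = D.card - 1 := card_erase_of_mem hT₀D
          have h3 : 1 ≤ D.card := card_pos.2 ⟨T₀, hT₀D⟩
          omega
        have happ := ih1 (Dset (gameWith G w)).card hDwcard'
          ((Dset (gameWith G w)).biUnion id).card (gameWith G w) hGw hwdiverse
          le_rfl le_rfl
        exact ⟨happ i hiN, happ j hjN⟩
    -- FwC for f and for g
    have hGvw' : gameWith G ((fun S => G.v S - w S) + w) = G := by
      have hsum : ((fun S => G.v S - w S) + w) = G.v := by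
        funext S
        show G.v S - w S + w S = G.v S
        ring
      rw [hsum]
      rfl
    have hGvmw : IsGD (gameWith G (fun S => G.v S - w S)) := by
      refine ⟨?_, hG.2⟩
      show G.v ∅ - w ∅ = 0
      rw [hG.1, hw0, sub_zero]
    have hFwf := hFwCf G (fun S => G.v S - w S) w hGvmw hGw p i hip j hjp hsymvw
    have hFwg := hFwCg G (fun S => G.v S - w S) w hGvmw hGw p i hip j hjp hsymvw
    rw [hGvw'] at hFwf hFwg
    have h1 := hIH.1
    have h2 := hIH.2
    linarith
  -- component sums conclude
  have hcsf := comp_sum_of_axioms f hEf hFDf hNDf G hG p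
  have hcsg := comp_sum_of_axioms g hEg hFDg hNDg G hG p
  have hsum0 : ∑ j ∈ G.B p, (f G j - g G j) = 0 := by
    rw [sum_sub_distrib, hcsf, hcsg]
    ring
  have hsplit : ∑ j ∈ G.B p, (f G j - g G j)
      = ((G.B p).filter (fun j => j ∈ U)).card • (f G i - g G i) := by
    rw [← sum_filter_add_sum_filter_not (G.B p) (fun j => j ∈ U)]
    have hA : ∀ j ∈ (G.B p).filter (fun j => j ∈ U), f G j - g G j = f G i - g G i := by
      intro j hj
      rw [mem_filter] at hj
      by_cases hji : j = i
      · subst hji; rfl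
      · exact (hdiffstep j hj.1 hj.2 hji).symm
    have hB : ∀ j ∈ (G.B p).filter (fun j => j ∉ U), f G j - g G j = 0 := by
      intro j hj
      rw [mem_filter] at hj
      have := hnull_val j (hG.2.1 p hj.1) hj.2
      rw [this.1, this.2, sub_zero]
    rw [sum_congr rfl hA, sum_congr rfl hB, sum_const, sum_const, smul_zero, add_zero]
  have hipos : i ∈ (G.B p).filter (fun j => j ∈ U) := mem_filter.2 ⟨hip, hiU⟩
  have hcardpos : 0 < ((G.B p).filter (fun j => j ∈ U)).card := card_pos.2 ⟨i, hipos⟩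
  rw [hsplit, nsmul_eq_mul] at hsum0
  have : ((((G.B p).filter (fun j => j ∈ U)).card : ℕ) : ℝ) ≠ 0 := by positivity
  have hzero : f G i - g G i = 0 := by
    rcases mul_eq_zero.1 hsum0 with h | h
    · exact absurd h this
    · exact h
  linarith

end Main

/-- the Diversity Owen value is the unique value on GD satisfying
E, FwC, FD, INDC and ND. -/
theorem diversityOwen_characterization_three :
    (Efficiency DOw ∧ FwC DOw ∧ FD DOw ∧ INDC DOw ∧ ND DOw) ∧
    (∀ f : Value, Efficiency f → FwC f → FD f → INDC f → ND f →
      ∀ G, IsGD G → ∀ i ∈ G.N, f G i = DOw G i) := by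
  constructor
  · exact ⟨DOw_efficiency, DOw_FwC, DOw_FD, DOw_INDC, DOw_ND⟩
  · intro f hE hFwC hFD hINDC hND G hG i hiN
    set vd : Finset ℕ → ℝ := restrictedGame G with hvd
    have hGvd : IsGD (gameWith G vd) := ⟨rg_empty hG, hG.2⟩
    have hagree : ∀ S ⊆ G.N, DiverseCoal G S → G.v S = vd S := by
      intro S _ hd
      rw [hvd]
      unfold restrictedGame
      rw [if_pos hd]
    have h1 : f G i = f (gameWith G vd) i :=
      hINDC G G.v vd ⟨hG.1, hG.2⟩ hGvd hagree i hiN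
    have h2 : DOw G i = DOw (gameWith G vd) i :=
      DOw_INDC G G.v vd ⟨hG.1, hG.2⟩ hGvd hagree i hiN
    have hdivG' : IsDiverseGame (gameWith G vd) := by
      intro S hS hne
      have hne' : restrictedGame G S ≠ 0 := hne
      by_contra hnd
      have hnd' : ¬ DiverseCoal G S := hnd
      exact hne' (by unfold restrictedGame; rw [if_neg hnd'])
    have hmain := main_agree f DOw hE hFwC hFD hND
      DOw_efficiency DOw_FwC DOw_FD DOw_ND
      (Dset (gameWith G vd)).card ((Dset (gameWith G vd)).biUnion id).card
      (gameWith G vd) hGvd hdivG' le_rfl le_rfl i hiN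
    rw [h1, h2, hmain]
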